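/- Let W = M(c,h) be a Virasoro Verma module. Let n ∈ ℤ_+, n_1 ≥ ⋯ ≥ n_s ≥ 2, let l ∈ ℤ_+, p ∈ {1,…,l}, let α_1 < ⋯ < α_p be an increasing sequence in {1,…,l} with complement α^c_1 < ⋯ < α^c_{l-p}, and let m_1,…,m_l ∈ ℤ satisfy m_{α_i} ≥ −1 for i = 1,…,p and m_{α^c_j} < −1 for j = 1,…,l−p. Then Ind(L(m_1)⋯L(m_l)L(-n_1)⋯L(-n_s)L(-1)^n 1_{c,h}) ≤ n + p. Moreover, for fixed values m_{α^c_1},…,m_{α^c_{l-p}} < −1, only finitely many choices of m_{α_1},…,m_{α_p} ≥ −1 yield Ind(L(m_1)⋯L(m_l)L(-n_1)⋯L(-n_s)L(-1)^n 1_{c,h}) ≥ n. -/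

import Mathlib

open scoped BigOperators

noncomputable section

/-- A representation of the Virasoro algebra on a `ℂ`-vector space `M`, with the
central element `k` acting by the scalar `cc`. -/
structure VirRep (M : Type) [AddCommGroup M] [Module ℂ M] : Type where
  L : ℤ → M → M
  cc : ℂ
  L_linear : ∀ n : ℤ, IsLinearMap ℂ (L n)
  comm : ∀ (m n : ℤ) (x : M),
    L m (L n x) - L n (L m x) =
      ((m - n : ℤ) : ℂ) • L (m + n) x +
        (if m + n = 0 then ((m ^ 3 - m : ℤ) : ℂ) / 12 * cc else 0) • x

/-- Index of the standard PBW monomials `L(-p₁)⋯L(-p_t)L(-1)^q 𝟙` of a Verma module: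
a weakly decreasing list of integers `≥ 2` together with the exponent `q` of `L(-1)`. -/
def VirIdx : Type := {l : List ℕ // l.Chain' (· ≥ ·) ∧ ∀ a ∈ l, 2 ≤ a} × ℕ

/-- The level of a monomial index. -/
def VirIdx.level (i : VirIdx) : ℕ := i.1.1.sum + i.2

/-- The monomial index of `L(-1)^q 𝟙`. -/
def VirIdx.pure (q : ℕ) : VirIdx := (⟨[], List.isChain_nil, by simp⟩, q)

/-- The monomial `L(-p₁)⋯L(-p_t)L(-1)^q v`. -/
def VirRep.monomial {M : Type} [AddCommGroup M] [Module ℂ M] (R : VirRep M) (v : M)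
    (i : VirIdx) : M :=
  i.1.1.foldr (fun a acc => R.L (-(a : ℤ)) acc) ((fun x => R.L (-1) x)^[i.2] v)

/-- The Verma module `M(c,h)` for the Virasoro algebra: a representation with central
charge `c` and a highest-weight vector `hw` of weight `h` annihilated by the positive
part, such that the standard monomials form a basis. -/
structure VirVerma (M : Type) [AddCommGroup M] [Module ℂ M] (c h : ℂ)
    extends VirRep M : Type where
  cc_eq : cc = c
  hw : M
  hw_L0 : L 0 hw = h • hw
  hw_sing : ∀ n : ℤ, 0 < n → L n hw = 0
  bas : Module.Basis VirIdx ℂ M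
  bas_eq : ∀ i : VirIdx, bas i = toVirRep.monomial hw i

/-- The index `Ind(w)` of `w` (Definition 5.3 of the paper): the largest exponent `q`
of `L(-1)` occurring in the standard expression of `w`, with `Ind 0 = -1`. -/
def VirVerma.Ind {M : Type} [AddCommGroup M] [Module ℂ M] {c h : ℂ}
    (Vm : VirVerma M c h) (w : M) : ℤ :=
  (((Vm.bas.repr w).support.image (fun i : VirIdx => (i.2 : ℤ))).max).unbotD (-1)

/-- A singular vector: annihilated by `L(n)` for all `n > 0`. -/
def IsSingular {M : Type} [AddCommGroup M] [Module ℂ M] (R : VirRep M) (w : M) : Prop :=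
  ∀ n : ℤ, 0 < n → R.L n w = 0

/-- Stability of a subspace under the Virasoro action. -/
def VirInvariant {M : Type} [AddCommGroup M] [Module ℂ M] (R : VirRep M)
    (S : Submodule ℂ M) : Prop :=
  ∀ (n : ℤ) (x : M), x ∈ S → R.L n x ∈ S

/-- The Vir-submodule generated by a subset. -/
def VirGen {M : Type} [AddCommGroup M] [Module ℂ M] (R : VirRep M) (s : Set M) :
    Submodule ℂ M :=
  sInf {U : Submodule ℂ M | VirInvariant R U ∧ s ⊆ U}

/-!
`L m` raises the index of a standard monomial by at most one, and only when `m ≥ -1`; a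
generator `L m` with `m ≤ -2` is either prepended to the monomial or commuted past its leading
factor, and the commutators only produce monomials of lower level (strong induction on the
level). Applying `L(m_l), …, L(m_1)` to `L(-n_1)⋯L(-n_s)L(-1)^n 1` therefore gives a vector of
index `≤ n + p` and level `∑ n_j + n - ∑ m_i`. Since the index never exceeds the level, index
`≥ n` forces `∑ m_i ≤ ∑ n_j`, which leaves finitely many choices of the `m_{α_i} ≥ -1`.
-/

theorem VirRep.L_L_swap {M : Type} [AddCommGroup M] [Module ℂ M] (R : VirRep M)
    (m n : ℤ) (x : M) :
    R.L m (R.L n x) = R.L n (R.L m x) + ((m - n : ℤ) : ℂ) • R.L (m + n) x +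
      (if m + n = 0 then ((m ^ 3 - m : ℤ) : ℂ) / 12 * R.cc else 0) • x := by
  rw [add_assoc, ← R.comm m n x]
  abel

/-- The largest possible increase of `Ind` under `L m`. -/
def indexRaise (m : ℤ) : ℕ := if -1 ≤ m then 1 else 0

theorem indexRaise_mono {a b : ℤ} (hab : a ≤ b) : indexRaise a ≤ indexRaise b := by
  unfold indexRaise; split_ifs <;> omega

theorem sum_indexRaise_eq_card {ι : Type*} [Fintype ι] (S : Finset ι) (m : ι → ℤ)
    (hmS : ∀ i ∈ S, -1 ≤ m i) (hmSc : ∀ i ∉ S, m i < -1) :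
    ∑ i, indexRaise (m i) = S.card := by
  classical
  have h : ∀ i, indexRaise (m i) = if i ∈ S then 1 else 0 := by
    intro i
    by_cases hi : i ∈ S
    · simp [indexRaise, hi, hmS i hi]
    · simp [indexRaise, hi, (hmSc i hi).not_ge]
  simp [h]

theorem finite_setOf_le_of_sum_le {ι : Type*} [Fintype ι] (lo : ι → ℤ) (B : ℤ) :
    {f : ι → ℤ | lo ≤ f ∧ ∑ i, f i ≤ B}.Finite := by
  refine (Set.Finite.pi (t := fun i => Set.Icc (lo i) (lo i + (B - ∑ j, lo j)))
    fun i => Set.finite_Icc _ _).subset ?_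
  rintro f ⟨hlo, hB⟩ i -
  have hi : f i - lo i ≤ ∑ j, (f j - lo j) :=
    Finset.single_le_sum (f := fun j => f j - lo j) (fun j _ => sub_nonneg.2 (hlo j))
      (Finset.mem_univ i)
  rw [Finset.sum_sub_distrib] at hi
  exact ⟨hlo i, by linarith⟩

namespace VirVerma

variable {M : Type} [AddCommGroup M] [Module ℂ M] {c h : ℂ} (Vm : VirVerma M c h)

def indexLevelSpan (k : ℕ) (d : ℤ) : Submodule ℂ M :=
  Submodule.span ℂ (Vm.bas '' {i | i.2 ≤ k ∧ (i.level : ℤ) = d})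

variable {Vm}

theorem mem_indexLevelSpan_iff {k : ℕ} {d : ℤ} {w : M} :
    w ∈ Vm.indexLevelSpan k d ↔
      ∀ i ∈ (Vm.bas.repr w).support, i.2 ≤ k ∧ (i.level : ℤ) = d := by
  rw [indexLevelSpan, Module.Basis.mem_span_image]
  rfl

theorem bas_mem_indexLevelSpan {k : ℕ} {d : ℤ} {i : VirIdx} (hk : i.2 ≤ k)
    (hd : (i.level : ℤ) = d) : Vm.bas i ∈ Vm.indexLevelSpan k d :=
  Submodule.subset_span ⟨i, ⟨hk, hd⟩, rfl⟩

theorem mem_indexLevelSpan_of_le {k k' : ℕ} {d d' : ℤ} (hk : k ≤ k') (hd : d = d') {w : M}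
    (hw : w ∈ Vm.indexLevelSpan k d) : w ∈ Vm.indexLevelSpan k' d' := by
  subst hd
  exact Submodule.span_mono
    (Set.image_mono (by rintro i ⟨hik, hid⟩; exact ⟨hik.trans hk, hid⟩)) hw

theorem L_mem_of_forall_bas {k : ℕ} {d : ℤ} {V : Submodule ℂ M} {m : ℤ}
    (hV : ∀ i : VirIdx, i.2 ≤ k → (i.level : ℤ) = d → Vm.L m (Vm.bas i) ∈ V) {w : M}
    (hw : w ∈ Vm.indexLevelSpan k d) : Vm.L m w ∈ V := by
  have hspan : Vm.indexLevelSpan k d ≤ V.comap (IsLinearMap.mk' _ (Vm.L_linear m)) :=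
    Submodule.span_le.2 (by rintro _ ⟨i, ⟨hk, hd⟩, rfl⟩; exact hV i hk hd)
  exact hspan hw

theorem bas_of_cons {i j : VirIdx} {a : ℕ} (hij : i.1.1 = a :: j.1.1) (hq : i.2 = j.2) :
    Vm.bas i = Vm.L (-a) (Vm.bas j) := by
  rw [Vm.bas_eq, Vm.bas_eq, VirRep.monomial, VirRep.monomial, hij, hq]
  rfl

theorem bas_of_nil_succ {i j : VirIdx} (hi : i.1.1 = []) (hj : j.1.1 = [])
    (hq : i.2 = j.2 + 1) :
    Vm.bas i = Vm.L (-1) (Vm.bas j) := by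
  rw [Vm.bas_eq, Vm.bas_eq, VirRep.monomial, VirRep.monomial, hi, hj, hq]
  exact Function.iterate_succ_apply' _ _ Vm.hw

variable (Vm) in
def IndexRaiseBoundBelow (μ : ℤ) : Prop :=
  ∀ (k : ℕ) (d : ℤ) (w : M) (m : ℤ), d < μ → w ∈ Vm.indexLevelSpan k d →
    Vm.L m w ∈ Vm.indexLevelSpan (k + indexRaise m) (d - m)

/-- Writing `L b L a = L a L b + (b - a) L (b + a) + central term`, every term on the right
only involves applying `L` to vectors of level below that of `L a x`. -/
theorem L_L_mem_of_lt {μ a b : ℤ} (H : Vm.IndexRaiseBoundBelow μ) (ha : a ≤ -1) (hab : a < b)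
    {k : ℕ} {d : ℤ} (hd : d - a ≤ μ) {x : M} (hx : x ∈ Vm.indexLevelSpan k d) :
    Vm.L b (Vm.L a x) ∈ Vm.indexLevelSpan (k + indexRaise a + indexRaise b) (d - a - b) := by
  rw [Vm.L_L_swap]
  refine add_mem (add_mem ?_ (Submodule.smul_mem _ _ ?_)) ?_
  · have hbx := H k d x b (by omega) hx
    exact mem_indexLevelSpan_of_le (by omega) (by ring) (H _ _ _ a (by omega) hbx)
  · have := indexRaise_mono (show b + a ≤ b by omega)
    exact mem_indexLevelSpan_of_le (by omega) (by ring) (H k d x (b + a) (by omega) hx)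
  · split_ifs with hba
    · exact Submodule.smul_mem _ _ (mem_indexLevelSpan_of_le (by omega) (by omega) hx)
    · rw [zero_smul]
      exact zero_mem _

theorem L_bas_mem_of_le_head {m : ℤ} {i : VirIdx} (hm : m ≤ -2)
    (hhead : ∀ b ∈ i.1.1.head?, m ≤ -(b : ℤ)) :
    Vm.L m (Vm.bas i) ∈ Vm.indexLevelSpan (i.2 + indexRaise m) (i.level - m) := by
  let i' : VirIdx := (⟨(-m).toNat :: i.1.1, List.isChain_cons.2 ⟨fun b hb => by
    have := hhead b hb; omega, i.1.2.1⟩, by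
      rintro b (_ | ⟨_, hb⟩)
      · omega
      · exact i.1.2.2 b hb⟩, i.2)
  have hi' := bas_mem_indexLevelSpan (Vm := Vm) (i := i') le_rfl rfl
  rw [bas_of_cons (i := i') (j := i) rfl rfl, show -(((-m).toNat : ℕ) : ℤ) = m by omega] at hi'
  refine mem_indexLevelSpan_of_le (by simp [i', indexRaise]) ?_ hi'
  simp only [i', VirIdx.level, List.sum_cons]
  omega

theorem L_neg_one_bas_mem_of_nil {i : VirIdx} (hi : i.1.1 = []) :
    Vm.L (-1) (Vm.bas i) ∈ Vm.indexLevelSpan (i.2 + indexRaise (-1)) (i.level - -1) := by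
  let i' : VirIdx := (⟨[], List.isChain_nil, by simp⟩, i.2 + 1)
  have hi' := bas_mem_indexLevelSpan (Vm := Vm) (i := i') le_rfl rfl
  rw [bas_of_nil_succ (j := i) rfl hi rfl] at hi'
  refine mem_indexLevelSpan_of_le (by simp [i', indexRaise]) ?_ hi'
  simp only [i', VirIdx.level, hi]
  omega

theorem L_bas_pure_zero_mem {m : ℤ} (hm : 0 ≤ m) :
    Vm.L m (Vm.bas (VirIdx.pure 0)) ∈ Vm.indexLevelSpan (0 + indexRaise m) (0 - m) := by
  have hhw : Vm.bas (VirIdx.pure 0) = Vm.hw := by rw [Vm.bas_eq]; rfl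
  rcases hm.eq_or_lt with rfl | hpos
  · rw [hhw, Vm.hw_L0, ← hhw]
    exact Submodule.smul_mem _ _ (bas_mem_indexLevelSpan (Nat.zero_le _) rfl)
  · rw [hhw, Vm.hw_sing m hpos]
    exact zero_mem _

theorem L_bas_mem_of_nil_of_pos {m : ℤ} {i : VirIdx} (H : Vm.IndexRaiseBoundBelow i.level)
    (hi : i.1.1 = []) (hq : 0 < i.2) (hm : 0 ≤ m) :
    Vm.L m (Vm.bas i) ∈ Vm.indexLevelSpan (i.2 + indexRaise m) (i.level - m) := by
  let j : VirIdx := (⟨[], List.isChain_nil, by simp⟩, i.2 - 1)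
  rw [bas_of_nil_succ (j := j) hi rfl (by simp [j]; omega)]
  have hlevel : i.level = i.2 := by simp [VirIdx.level, hi]
  have hjlevel : j.level = i.2 - 1 := by simp [j, VirIdx.level]
  refine mem_indexLevelSpan_of_le ?_ ?_ (L_L_mem_of_lt H le_rfl (by omega)
    (by omega) (bas_mem_indexLevelSpan (i := j) le_rfl rfl))
  · simp [j, indexRaise]
    omega
  · omega

theorem L_bas_mem_of_cons {m : ℤ} {i : VirIdx} {p : ℕ} {ps : List ℕ}
    (H : Vm.IndexRaiseBoundBelow i.level) (hi : i.1.1 = p :: ps) (hm : -(p : ℤ) < m) :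
    Vm.L m (Vm.bas i) ∈ Vm.indexLevelSpan (i.2 + indexRaise m) (i.level - m) := by
  have hp : 2 ≤ p := i.1.2.2 p (hi ▸ List.mem_cons_self)
  let j : VirIdx := (⟨ps, (hi ▸ i.1.2.1).tail,
    fun b hb => i.1.2.2 b (hi ▸ List.mem_cons_of_mem _ hb)⟩, i.2)
  rw [bas_of_cons (j := j) hi rfl]
  have hlevel : i.level = p + ps.sum + i.2 := by rw [VirIdx.level, hi, List.sum_cons]
  have hjlevel : j.level = ps.sum + i.2 := rfl
  refine mem_indexLevelSpan_of_le ?_ ?_ (L_L_mem_of_lt H (by omega) hm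
    (by omega) (bas_mem_indexLevelSpan (i := j) le_rfl rfl))
  · simp [j, indexRaise]
    omega
  · omega

theorem L_bas_mem (m : ℤ) (i : VirIdx) :
    Vm.L m (Vm.bas i) ∈ Vm.indexLevelSpan (i.2 + indexRaise m) (i.level - m) := by
  induction hμ : i.level using Nat.strong_induction_on generalizing i m with
  | _ μ IH =>
  have H : Vm.IndexRaiseBoundBelow μ := fun k d w m hd hw =>
    L_mem_of_forall_bas (fun j hjk hjd =>
      mem_indexLevelSpan_of_le (by omega) (by omega) (IH j.level (by omega) m j rfl)) hw
  subst hμ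
  by_cases hprep : m ≤ -2 ∧ ∀ b ∈ i.1.1.head?, m ≤ -(b : ℤ)
  · exact L_bas_mem_of_le_head hprep.1 hprep.2
  rcases hps : i.1.1 with _ | ⟨p, ps⟩
  · rcases (show m = -1 ∨ 0 ≤ m by simp [hps] at hprep; omega) with rfl | hm0
    · exact L_neg_one_bas_mem_of_nil hps
    rcases Nat.eq_zero_or_pos i.2 with hq | hq
    · obtain rfl : i = VirIdx.pure 0 := Prod.ext (Subtype.ext hps) hq
      exact L_bas_pure_zero_mem hm0
    · exact L_bas_mem_of_nil_of_pos H hps hq hm0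
  · have hp : 2 ≤ p := i.1.2.2 p (hps ▸ List.mem_cons_self)
    exact L_bas_mem_of_cons H hps (by simp [hps] at hprep; omega)

theorem L_mem_indexLevelSpan (m : ℤ) {k : ℕ} {d : ℤ} {w : M}
    (hw : w ∈ Vm.indexLevelSpan k d) :
    Vm.L m w ∈ Vm.indexLevelSpan (k + indexRaise m) (d - m) :=
  L_mem_of_forall_bas (fun i hik hid =>
    mem_indexLevelSpan_of_le (by omega) (by rw [hid]) (L_bas_mem m i)) hw

theorem foldr_L_mem_indexLevelSpan {ι : Type*} (f : ι → ℤ) (l : List ι) {k : ℕ} {d : ℤ}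
    {w : M} (hw : w ∈ Vm.indexLevelSpan k d) :
    l.foldr (fun i acc => Vm.L (f i) acc) w ∈
      Vm.indexLevelSpan (k + (l.map fun i => indexRaise (f i)).sum) (d - (l.map f).sum) := by
  induction l with
  | nil => simpa using hw
  | cons i l ih =>
    refine mem_indexLevelSpan_of_le ?_ ?_ (L_mem_indexLevelSpan (f i) ih)
    · simp only [List.map_cons, List.sum_cons]
      omega
    · simp only [List.map_cons, List.sum_cons]
      ring

theorem Ind_le_of_forall_support {w : M} {t : ℤ} (ht : -1 ≤ t)
    (hw : ∀ i ∈ (Vm.bas.repr w).support, (i.2 : ℤ) ≤ t) : Vm.Ind w ≤ t := by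
  rw [VirVerma.Ind, WithBot.unbotD_le_iff (fun _ => ht), Finset.max_le_iff]
  simpa using hw

theorem Ind_le_of_mem_indexLevelSpan {k : ℕ} {d : ℤ} {w : M}
    (hw : w ∈ Vm.indexLevelSpan k d) : Vm.Ind w ≤ k :=
  Ind_le_of_forall_support (by omega) fun i hi => by
    exact_mod_cast (mem_indexLevelSpan_iff.1 hw i hi).1

theorem Ind_le_level_of_mem_indexLevelSpan {k : ℕ} {d : ℤ} {w : M}
    (hw : w ∈ Vm.indexLevelSpan k d) : Vm.Ind w ≤ max d (-1) :=
  Ind_le_of_forall_support (le_max_right _ _) fun i hi => by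
    have hid := (mem_indexLevelSpan_iff.1 hw i hi).2
    have : i.2 ≤ i.level := Nat.le_add_left _ _
    omega

end VirVerma

theorem virasoro_index_estimates_general_general
    {M : Type} [AddCommGroup M] [Module ℂ M] (c h : ℂ) (Vm : VirVerma M c h)
    (n : ℕ)
    (ns : List ℕ) (hdec : ns.Chain' (· ≥ ·)) (h2 : ∀ a ∈ ns, 2 ≤ a)
    (l : ℕ)
    (S : Finset (Fin l)) (p : ℕ) (hp : S.card = p)
    (m : Fin l → ℤ)
    (hmS : ∀ i ∈ S, -1 ≤ m i) (hmSc : ∀ i ∉ S, m i < -1)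
    (w0 : M)
    (hw0 : w0 = ns.foldr (fun a acc => Vm.L (-(a : ℤ)) acc)
      ((fun x => Vm.L (-1) x)^[n] Vm.hw)) :
    Vm.Ind ((List.finRange l).foldr (fun i acc => Vm.L (m i) acc) w0) ≤ (n : ℤ) + p ∧
    {m' : Fin l → ℤ | (∀ i ∉ S, m' i = m i) ∧ (∀ i ∈ S, -1 ≤ m' i) ∧
      (n : ℤ) ≤ Vm.Ind ((List.finRange l).foldr (fun i acc => Vm.L (m' i) acc) w0)}.Finite := by
  have hstart : w0 ∈ Vm.indexLevelSpan n (ns.sum + n) := by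
    rw [hw0.trans (Vm.bas_eq (⟨ns, hdec, h2⟩, n)).symm]
    exact VirVerma.bas_mem_indexLevelSpan le_rfl (by simp [VirIdx.level])
  have hfold := fun m' => VirVerma.foldr_L_mem_indexLevelSpan m' (List.finRange l) hstart
  constructor
  · have hraise := sum_indexRaise_eq_card S m hmS hmSc
    rw [Fin.sum_univ_def, hp] at hraise
    have := VirVerma.Ind_le_of_mem_indexLevelSpan (hfold m)
    rwa [hraise] at this
  · refine (finite_setOf_le_of_sum_le (fun i => if i ∈ S then -1 else m i) ns.sum).subset ?_
    rintro m' ⟨hoff, hon, hInd⟩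
    refine ⟨fun i => ?_, ?_⟩
    · by_cases hi : i ∈ S
      · simpa [hi] using hon i hi
      · simp [hi, hoff i hi]
    · have := hInd.trans (VirVerma.Ind_le_level_of_mem_indexLevelSpan (hfold m'))
      rw [← Fin.sum_univ_def] at this
      omega

/-- Corollary 5.7 of the paper.
Let `W = M(c,h)` be a Virasoro Verma module, `n ∈ ℤ₊`, `n₁ ≥ ⋯ ≥ n_s ≥ 2`, `l ∈ ℤ₊`,
and let `S ⊆ {1,…,l}` (the positions of an increasing sequence `α₁ < ⋯ < α_p`) with
`|S| = p ≥ 1`, and `m : {1,…,l} → ℤ` with `m i ≥ -1` on `S` and `m i < -1` off `S`.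
Then `Ind(L(m₁)⋯L(m_l)L(-n₁)⋯L(-n_s)L(-1)^n 𝟙) ≤ n + p`; moreover, for fixed values
of `m` off `S`, only finitely many choices of `m ≥ -1` on `S` yield
`Ind(L(m₁)⋯L(m_l)L(-n₁)⋯L(-n_s)L(-1)^n 𝟙) ≥ n`. -/
theorem virasoro_index_estimates_general
    {M : Type} [AddCommGroup M] [Module ℂ M] (c h : ℂ) (Vm : VirVerma M c h)
    (n : ℕ) (hn : 1 ≤ n)
    (ns : List ℕ) (hdec : ns.Chain' (· ≥ ·)) (h2 : ∀ a ∈ ns, 2 ≤ a)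
    (l : ℕ) (hl : 1 ≤ l)
    (S : Finset (Fin l)) (p : ℕ) (hp : S.card = p) (hp1 : 1 ≤ p)
    (m : Fin l → ℤ)
    (hmS : ∀ i ∈ S, -1 ≤ m i) (hmSc : ∀ i ∉ S, m i < -1)
    (w0 : M)
    (hw0 : w0 = ns.foldr (fun a acc => Vm.L (-(a : ℤ)) acc)
      ((fun x => Vm.L (-1) x)^[n] Vm.hw)) :
    Vm.Ind ((List.finRange l).foldr (fun i acc => Vm.L (m i) acc) w0) ≤ (n : ℤ) + p ∧
    {m' : Fin l → ℤ | (∀ i ∉ S, m' i = m i) ∧ (∀ i ∈ S, -1 ≤ m' i) ∧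
      (n : ℤ) ≤ Vm.Ind ((List.finRange l).foldr (fun i acc => Vm.L (m' i) acc) w0)}.Finite :=
  virasoro_index_estimates_general_general c h Vm n ns hdec h2 l S p hp m hmS hmSc w0 hw0
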